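/- Suppose 0 < D_min ≤ D_j ≤ D_max for all j, m > p + 2, and h₊ : [0,∞) → ℝ satisfies 0 ≤ h₊(A) ≤ C for all A ≥ 0 and some constant C > 0. Then for each fixed i and fixed y ∈ ℝ^m, the adjusted likelihood A ↦ h₊(A)·(A + D_i)·L_RE(A) tends to 0 as A → ∞. -/

import Mathlib

/-! As `A → ∞`, `det V(A) ~ A^m` and `A^p · det(Xᵀ V(A)⁻¹ X) → det(Xᵀ X) > 0`, so the determinant
factors of `L_RE(A)` are `O(A^(-(m-p)/2))`, which beats the factor `A + Dᵢ` because `m - p > 2`.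
The exponential factor lies in `(0, 1]` because `P(A) = Nᵀ V(A)⁻¹ N` with
`N = I - X (Xᵀ V(A)⁻¹ X)⁻¹ Xᵀ V(A)⁻¹` is positive semidefinite, and `h₊` is bounded. -/

open Matrix

/-- The covariance matrix `V(A) = diag(A + D₁, …, A + Dₘ)` of the Fay–Herriot model. -/
noncomputable def Vmat {m : ℕ} (D : Fin m → ℝ) (A : ℝ) : Matrix (Fin m) (Fin m) ℝ :=
  Matrix.diagonal (fun j => A + D j)

/-- The matrix `P(A) = V(A)⁻¹ − V(A)⁻¹ X (Xᵀ V(A)⁻¹ X)⁻¹ Xᵀ V(A)⁻¹`. -/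
noncomputable def Pmat {m p : ℕ} (X : Matrix (Fin m) (Fin p) ℝ) (D : Fin m → ℝ) (A : ℝ) :
    Matrix (Fin m) (Fin m) ℝ :=
  (Vmat D A)⁻¹ - (Vmat D A)⁻¹ * X * (Xᵀ * (Vmat D A)⁻¹ * X)⁻¹ * Xᵀ * (Vmat D A)⁻¹

/-- The residual likelihood
`L_RE(A) = det(Xᵀ V(A)⁻¹ X)^(−1/2) · det(V(A))^(−1/2) · exp(−½ yᵀ P(A) y)`. -/
noncomputable def LRE {m p : ℕ} (X : Matrix (Fin m) (Fin p) ℝ) (D : Fin m → ℝ)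
    (y : Fin m → ℝ) (A : ℝ) : ℝ :=
  ((Xᵀ * (Vmat D A)⁻¹ * X).det) ^ (-(1 : ℝ) / 2) * ((Vmat D A).det) ^ (-(1 : ℝ) / 2) *
    Real.exp (-(1 / 2) * (y ⬝ᵥ (Pmat X D A).mulVec y))

open Filter Topology

namespace Matrix

variable {m n : Type*} [Fintype n]

lemma mulVec_injective_of_rank_eq_card {X : Matrix m n ℝ} (hX : X.rank = Fintype.card n) :
    Function.Injective X.mulVec := by
  have h := X.mulVecLin.finrank_range_add_finrank_ker
  rw [← Matrix.rank, hX, Module.finrank_fintype_fun_eq_card] at h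
  have hker : LinearMap.ker X.mulVecLin = ⊥ := Submodule.finrank_eq_zero.mp (by omega)
  exact LinearMap.ker_eq_bot.mp hker

variable [Fintype m]

lemma det_transpose_mul_self_pos [DecidableEq n] {X : Matrix m n ℝ}
    (hX : X.rank = Fintype.card n) : 0 < (Xᵀ * X).det := by
  simpa using (PosDef.conjTranspose_mul_self X (mulVec_injective_of_rank_eq_card hX)).det_pos

variable [DecidableEq m] [DecidableEq n]

lemma sub_mul_inv_mul_eq_transpose_mul_mul {W : Matrix m m ℝ} (hW : Wᵀ = W) (X : Matrix m n ℝ)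
    (hM : IsUnit (Xᵀ * W * X).det) :
    W - W * X * (Xᵀ * W * X)⁻¹ * Xᵀ * W
      = (1 - X * (Xᵀ * W * X)⁻¹ * Xᵀ * W)ᵀ * W * (1 - X * (Xᵀ * W * X)⁻¹ * Xᵀ * W) := by
  have hMinv : (Xᵀ * (W * X))⁻¹ * (Xᵀ * (W * X)) = 1 := by
    simpa only [Matrix.mul_assoc] using nonsing_inv_mul _ hM
  have hMinvT : (Xᵀ * (W * X))⁻¹ᵀ = (Xᵀ * (W * X))⁻¹ := by
    rw [transpose_nonsing_inv, transpose_mul, transpose_mul, hW, transpose_transpose,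
      Matrix.mul_assoc]
  have hcancel (T : Matrix n m ℝ) : (Xᵀ * (W * X))⁻¹ * (Xᵀ * (W * (X * T))) = T := by
    calc (Xᵀ * (W * X))⁻¹ * (Xᵀ * (W * (X * T)))
        = (Xᵀ * (W * X))⁻¹ * (Xᵀ * (W * X)) * T := by simp only [Matrix.mul_assoc]
      _ = T := by rw [hMinv, Matrix.one_mul]
  simp only [transpose_sub, transpose_mul, transpose_one, transpose_transpose, Matrix.sub_mul,
    Matrix.mul_sub, Matrix.one_mul, Matrix.mul_one, Matrix.mul_assoc, hMinvT, hW, hcancel]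
  abel

lemma PosSemidef.sub_mul_inv_mul {W : Matrix m m ℝ} (hW : W.PosSemidef) (X : Matrix m n ℝ) :
    (W - W * X * (Xᵀ * W * X)⁻¹ * Xᵀ * W).PosSemidef := by
  by_cases hM : IsUnit (Xᵀ * W * X).det
  · have hWT : Wᵀ = W := by
      simpa only [conjTranspose_eq_transpose_of_trivial] using hW.isHermitian.eq
    rw [sub_mul_inv_mul_eq_transpose_mul_mul hWT X hM]
    simpa only [conjTranspose_eq_transpose_of_trivial] using
      hW.conjTranspose_mul_mul_same (1 - X * (Xᵀ * W * X)⁻¹ * Xᵀ * W)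
  · rw [nonsing_inv_apply_not_isUnit _ hM]
    simpa only [Matrix.mul_zero, Matrix.zero_mul, sub_zero] using hW

end Matrix

lemma tendsto_add_const_div_self_atTop (d : ℝ) :
    Tendsto (fun A : ℝ => (A + d) / A) atTop (𝓝 1) := by
  have h : Tendsto (fun A : ℝ => 1 + d / A) atTop (𝓝 (1 + 0)) :=
    tendsto_const_nhds.add (tendsto_const_nhds.div_atTop tendsto_id)
  rw [add_zero] at h
  refine h.congr' ?_
  filter_upwards [eventually_ne_atTop 0] with A hA
  field_simp

lemma tendsto_add_mul_rpow_mul_rpow_atTop_zero {a b : ℝ → ℝ} {α β : ℝ} {p m : ℕ} (d : ℝ)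
    (hα : 0 < α) (hβ : 0 < β) (hpm : p + 2 < m)
    (ha : Tendsto (fun A => A ^ p * a A) atTop (𝓝 α))
    (hb : Tendsto (fun A => b A / A ^ m) atTop (𝓝 β)) :
    Tendsto (fun A => (A + d) * a A ^ (-(1 : ℝ) / 2) * b A ^ (-(1 : ℝ) / 2)) atTop (𝓝 0) := by
  set r : ℝ := -(1 : ℝ) / 2
  set e : ℝ := ((m : ℝ) - p) / 2 - 1
  have he : 0 < e := by
    have : (p : ℝ) + 2 < m := by exact_mod_cast hpm
    simp only [e]
    linarith
  -- `(A + d) a^r b^r = ((A + d) / A) · A^(-e) · (A^p a)^r · (b / A^m)^r`, with `r = -1/2`.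
  have hlim := (((tendsto_add_const_div_self_atTop d).mul (tendsto_rpow_neg_atTop he)).mul
    (ha.rpow_const (p := r) (Or.inl hα.ne'))).mul (hb.rpow_const (p := r) (Or.inl hβ.ne'))
  rw [mul_zero, zero_mul, zero_mul] at hlim
  refine hlim.congr' ?_
  filter_upwards [eventually_gt_atTop 0, ha.eventually (eventually_gt_nhds hα),
    hb.eventually (eventually_gt_nhds hβ)] with A hA hαA hβA
  have haA : 0 < a A := (mul_pos_iff_of_pos_left (pow_pos hA p)).1 hαA
  have hbA : 0 < b A := (div_pos_iff_of_pos_right (pow_pos hA m)).1 hβA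
  have hexp : A ^ (-e) * A ^ ((p : ℝ) * r) = A * A ^ ((m : ℝ) * r) := by
    rw [← Real.rpow_add hA, show -e + p * r = 1 + m * r by simp only [e, r]; ring,
      Real.rpow_add hA, Real.rpow_one]
  rw [Real.mul_rpow (by positivity) haA.le, Real.div_rpow hbA.le (by positivity),
    ← Real.rpow_natCast A p, ← Real.rpow_natCast A m, ← Real.rpow_mul hA.le,
    ← Real.rpow_mul hA.le]
  calc (A + d) / A * A ^ (-e) * (A ^ ((p : ℝ) * r) * a A ^ r) * (b A ^ r / A ^ ((m : ℝ) * r))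
      = (A + d) * a A ^ r * b A ^ r *
          ((A ^ (-e) * A ^ ((p : ℝ) * r)) / (A * A ^ ((m : ℝ) * r))) := by ring
    _ = (A + d) * a A ^ r * b A ^ r := by
        rw [hexp, div_self (by positivity), mul_one]

lemma eventually_forall_add_pos {ι : Type*} [Finite ι] (D : ι → ℝ) :
    ∀ᶠ A in atTop, ∀ j, 0 < A + D j :=
  eventually_all.2 fun j => (eventually_gt_atTop (-D j)).mono fun A hA => by linarith

variable {m p : ℕ}

lemma Vmat_inv {D : Fin m → ℝ} {A : ℝ} (hA : ∀ j, A + D j ≠ 0) :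
    (Vmat D A)⁻¹ = diagonal fun j => (A + D j)⁻¹ := by
  refine inv_eq_right_inv ?_
  rw [Vmat, diagonal_mul_diagonal]
  simp only [mul_inv_cancel₀ (hA _), diagonal_one]

lemma tendsto_pow_mul_det_transpose_mul_Vmat_inv_mul (X : Matrix (Fin m) (Fin p) ℝ)
    (D : Fin m → ℝ) :
    Tendsto (fun A => A ^ p * (Xᵀ * (Vmat D A)⁻¹ * X).det) atTop (𝓝 (Xᵀ * X).det) := by
  have hw : Tendsto (fun A : ℝ => fun j => A * (A + D j)⁻¹) atTop (𝓝 1) := by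
    refine tendsto_pi_nhds.2 fun j => ?_
    have := (tendsto_add_const_div_self_atTop (D j)).inv₀ one_ne_zero
    rw [inv_one] at this
    exact this.congr fun A => by rw [inv_div, div_eq_mul_inv]
  have hdet : Continuous fun w : Fin m → ℝ => (Xᵀ * diagonal w * X).det :=
    ((continuous_const.matrix_mul (continuous_id.matrix_diagonal)).matrix_mul
      continuous_const).matrix_det
  have hscale (A : ℝ) (w : Fin m → ℝ) :
      (Xᵀ * diagonal (A • w) * X).det = A ^ p * (Xᵀ * diagonal w * X).det := by
    rw [diagonal_smul, Matrix.mul_smul, Matrix.smul_mul, det_smul, Fintype.card_fin]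
  have := (hdet.tendsto 1).comp hw
  rw [show diagonal (1 : Fin m → ℝ) = 1 from diagonal_one, Matrix.mul_one] at this
  refine this.congr' ?_
  filter_upwards [eventually_forall_add_pos D] with A hA
  rw [Function.comp_apply, Vmat_inv fun j => (hA j).ne', ← hscale]
  rfl

lemma tendsto_det_Vmat_div_pow (D : Fin m → ℝ) :
    Tendsto (fun A => (Vmat D A).det / A ^ m) atTop (𝓝 1) := by
  have := tendsto_finsetProd Finset.univ fun j _ => tendsto_add_const_div_self_atTop (D j)
  simp only [Finset.prod_const_one] at this
  refine this.congr fun A => ?_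
  rw [Vmat, det_diagonal, Finset.prod_div_distrib, Finset.prod_const, Finset.card_univ,
    Fintype.card_fin]

lemma dotProduct_Pmat_mulVec_nonneg (X : Matrix (Fin m) (Fin p) ℝ) {D : Fin m → ℝ} {A : ℝ}
    (hA : ∀ j, 0 ≤ A + D j) (y : Fin m → ℝ) : 0 ≤ y ⬝ᵥ Pmat X D A *ᵥ y := by
  have hW : (Vmat D A)⁻¹.PosSemidef := (PosSemidef.diagonal fun j => hA j).inv
  rw [Pmat]
  simpa only [star_trivial] using (hW.sub_mul_inv_mul X).dotProduct_mulVec_nonneg y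

theorem stmt3_general {m p : ℕ} (hm : m > p + 2)
    (X : Matrix (Fin m) (Fin p) ℝ) (hX : X.rank = p)
    (D : Fin m → ℝ)
    (hplus : ℝ → ℝ) (C : ℝ)
    (hbound : ∀ A : ℝ, 0 ≤ A → 0 ≤ hplus A ∧ hplus A ≤ C)
    (i : Fin m) (y : Fin m → ℝ) :
    Filter.Tendsto (fun A : ℝ => hplus A * (A + D i) * LRE X D y A)
      Filter.atTop (nhds 0) := by
  have hdecay : Tendsto (fun A => (A + D i) * (Xᵀ * (Vmat D A)⁻¹ * X).det ^ (-(1 : ℝ) / 2) *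
      (Vmat D A).det ^ (-(1 : ℝ) / 2)) atTop (𝓝 0) :=
    tendsto_add_mul_rpow_mul_rpow_atTop_zero (D i)
      (det_transpose_mul_self_pos (by rwa [Fintype.card_fin])) one_pos hm
      (tendsto_pow_mul_det_transpose_mul_Vmat_inv_mul X D) (tendsto_det_Vmat_div_pow D)
  have hbdd : IsBoundedUnder (· ≤ ·) atTop
      (fun A => ‖hplus A * Real.exp (-(1 / 2) * (y ⬝ᵥ Pmat X D A *ᵥ y))‖) := by
    refine isBoundedUnder_of_eventually_le (a := C) ?_
    filter_upwards [eventually_ge_atTop 0, eventually_forall_add_pos D] with A hA hV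
    obtain ⟨h0, hC⟩ := hbound A hA
    have hq := dotProduct_Pmat_mulVec_nonneg X (fun j => (hV j).le) y
    rw [norm_mul, Real.norm_of_nonneg h0, Real.norm_of_nonneg (Real.exp_pos _).le]
    calc hplus A * Real.exp _ ≤ C * 1 :=
          mul_le_mul hC (Real.exp_le_one_iff.2 (by linarith)) (Real.exp_pos _).le (h0.trans hC)
      _ = C := mul_one C
  refine (hdecay.zero_mul_isBoundedUnder_le hbdd).congr fun A => ?_
  simp only [LRE]
  ring

/-- If `0 < Dmin ≤ Dⱼ ≤ Dmax`, `m > p + 2`, and `h₊` is bounded with `0 ≤ h₊ ≤ C` on `[0,∞)`,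
then for each fixed `i` and fixed `y`, the adjusted likelihood
`A ↦ h₊(A) · (A + Dᵢ) · L_RE(A)` tends to `0` as `A → ∞`. -/
theorem stmt3 {m p : ℕ} (hp : 0 < p) (hm : m > p + 2)
    (X : Matrix (Fin m) (Fin p) ℝ) (hX : X.rank = p)
    (D : Fin m → ℝ) (Dmin Dmax : ℝ) (hDmin : 0 < Dmin)
    (hD : ∀ j, Dmin ≤ D j ∧ D j ≤ Dmax)
    (hplus : ℝ → ℝ) (C : ℝ) (hC : 0 < C)
    (hbound : ∀ A : ℝ, 0 ≤ A → 0 ≤ hplus A ∧ hplus A ≤ C)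
    (i : Fin m) (y : Fin m → ℝ) :
    Filter.Tendsto (fun A : ℝ => hplus A * (A + D i) * LRE X D y A)
      Filter.atTop (nhds 0) :=
  stmt3_general hm X hX D hplus C hbound i y
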